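/- arXiv:1712.06901 — 7 statements merged into one kernel-verified Lean document; each statement's English description precedes it below -/
import Mathlib

section
/- Let Y be a functional extension of X. Then the map A ↦ *A from the power set of X to subsets of Y is an injective Boolean homomorphism: *(A ∩ B) = *A ∩ *B, *(A ∪ B) = *A ∪ *B, *(X \ A) = Y \ *A, *∅ = ∅, *X = Y, and *A ∩ X = A for all A, B ⊆ X. -/
attribute [local instance] Classical.propDecidable

/-- A functional extension of `X`: a proper superset `Y ⊇ X` (given via an injective,
non-surjective inclusion) with two designated distinct elements `0, 1 ∈ X`, together with
a distinguished extension `star f : Y → Y` of every `f : X → X`, preserving compositions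
and equalizers, and with directed Puritz preorder. -/
structure FunctionalExtension (X Y : Type*) where
  zero : X
  one : X
  zero_ne_one : zero ≠ one
  incl : X → Y
  incl_injective : Function.Injective incl
  proper : ¬ Function.Surjective incl
  star : (X → X) → Y → Y
  star_incl : ∀ (f : X → X) (x : X), star f (incl x) = incl (f x)
  comp : ∀ f g : X → X, star (g ∘ f) = star g ∘ star f
  equ : ∀ f g : X → X,
    star (fun x => if f x = g x then one else zero) =
      fun ξ => if star f ξ = star g ξ then incl one else incl zero
  dir : ∀ ξ η : Y, ∃ (p₁ p₂ : X → X) (ζ : Y), star p₁ ζ = ξ ∧ star p₂ ζ = η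

namespace FunctionalExtension

variable {X Y : Type*}

/-- The star-extension `*A ⊆ Y` of a subset `A ⊆ X`:
the set where the extension of the characteristic function of `A` takes the value `1`. -/
def sets (E : FunctionalExtension X Y) (A : Set X) : Set Y :=
  {ξ | E.star (fun x => if x ∈ A then E.one else E.zero) ξ = E.incl E.one}

/-- The S-topology on `Y`: the topology with basis `{*A : A ⊆ X}`. -/
def sTopology (E : FunctionalExtension X Y) : TopologicalSpace Y :=
  TopologicalSpace.generateFrom (Set.range E.sets)

end FunctionalExtension

section Helpers

namespace FunctionalExtension

variable {X Y : Type*} (E : FunctionalExtension X Y)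

private noncomputable def chi (A : Set X) : X → X := fun x => if x ∈ A then E.one else E.zero

private lemma mem_sets {A : Set X} {ξ : Y} :
    ξ ∈ E.sets A ↔ E.star (chi E A) ξ = E.incl E.one := Iff.rfl

private lemma star_const_one (ξ : Y) : E.star (fun _ => E.one) ξ = E.incl E.one := by
  have h := congrFun (E.equ id id) ξ
  have h2 : (fun x : X => if id x = id x then E.one else E.zero) = fun _ : X => E.one := by
    funext x; rw [if_pos rfl]
  rw [h2, if_pos rfl] at h
  exact h

private lemma star_const (c : X) (ξ : Y) : E.star (fun _ => c) ξ = E.incl c := by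
  have h := congrFun (E.comp (fun _ : X => E.one) (fun _ : X => c)) ξ
  rw [Function.comp_apply, star_const_one, E.star_incl] at h
  exact h

private lemma star_chi_eq (A : Set X) (ξ : Y) :
    E.star (chi E A) ξ = E.incl E.one ∨ E.star (chi E A) ξ = E.incl E.zero := by
  have h := congrFun (E.equ (chi E A) (fun _ => E.one)) ξ
  have h2 : (fun x => if chi E A x = (fun _ : X => E.one) x then E.one else E.zero)
      = chi E A := by
    funext x
    by_cases hx : x ∈ A
    · simp [chi, hx]
    · simp [chi, hx, E.zero_ne_one]
  rw [h2] at h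
  rw [h]
  split_ifs <;> simp

private lemma star_chi_of_not_mem {A : Set X} {ξ : Y} (h : ξ ∉ E.sets A) :
    E.star (chi E A) ξ = E.incl E.zero := by
  rcases star_chi_eq E A ξ with h1 | h1
  · exact absurd ((mem_sets E).mpr h1) h
  · exact h1

private lemma incl_mem_sets_iff (A : Set X) (x : X) : E.incl x ∈ E.sets A ↔ x ∈ A := by
  rw [mem_sets, E.star_incl]
  constructor
  · intro h
    by_contra hx
    rw [show chi E A x = E.zero from if_neg hx] at h
    exact E.zero_ne_one (E.incl_injective h)
  · intro hx
    rw [show chi E A x = E.one from if_pos hx]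

private lemma sets_empty : E.sets (∅ : Set X) = (∅ : Set Y) := by
  ext ξ
  simp only [Set.mem_empty_iff_false, iff_false]
  intro hmem
  have hmv : E.star (chi E (∅ : Set X)) ξ = E.incl E.one := (mem_sets E).mp hmem
  have h : chi E (∅ : Set X) = fun _ => E.zero := by funext x; simp [chi]
  rw [h, star_const] at hmv
  exact E.zero_ne_one (E.incl_injective hmv)

private lemma sets_univ : E.sets (Set.univ : Set X) = (Set.univ : Set Y) := by
  ext ξ
  simp only [Set.mem_univ, iff_true]
  rw [mem_sets]
  have h : chi E (Set.univ : Set X) = fun _ => E.one := by funext x; simp [chi]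
  rw [h, star_const]

private lemma sets_compl (A : Set X) : E.sets Aᶜ = (E.sets A)ᶜ := by
  ext ξ
  set n : X → X := fun u => if u = E.zero then E.one else E.zero with hn
  have hcomp : chi E Aᶜ = n ∘ chi E A := by
    funext x
    by_cases hx : x ∈ A
    · simp [chi, n, hx, Ne.symm E.zero_ne_one]
    · simp [chi, n, hx]
  have h := congrFun (E.comp (chi E A) n) ξ
  rw [← hcomp, Function.comp_apply] at h
  constructor
  · intro hmem hmemA
    have hA : E.star (chi E A) ξ = E.incl E.one := (mem_sets E).mp hmemA
    rw [hA, E.star_incl] at h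
    have h1 : n E.one = E.zero := if_neg (Ne.symm E.zero_ne_one)
    rw [h1] at h
    have h2 := ((mem_sets E).mp hmem).symm.trans h
    exact E.zero_ne_one (E.incl_injective h2.symm)
  · intro hnmem
    have hA := star_chi_of_not_mem E hnmem
    rw [hA, E.star_incl] at h
    have h1 : n E.zero = E.one := if_pos rfl
    rw [h1] at h
    exact (mem_sets E).mpr h

private lemma sets_inter_aux {t : X} (ht0 : t ≠ E.zero) (ht1 : t ≠ E.one) (A B : Set X) :
    E.sets (A ∩ B) = E.sets A ∩ E.sets B := by
  set g : X → X := fun x => if x ∈ B then E.one else t with hg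
  have h1 : (fun x => if chi E A x = g x then E.one else E.zero) = chi E (A ∩ B) := by
    funext x
    by_cases hA : x ∈ A <;> by_cases hB : x ∈ B <;>
      simp [chi, g, hA, hB, E.zero_ne_one, Ne.symm ht1, Ne.symm ht0]
  have heq := E.equ (chi E A) g
  rw [h1] at heq
  set σ : X → X := fun u => if u = E.one then E.one else t with hσ
  have hgc : g = σ ∘ chi E B := by
    funext x
    by_cases hB : x ∈ B <;> simp [g, σ, chi, hB, E.zero_ne_one]
  ext ξ
  have hsg := congrFun (E.comp (chi E B) σ) ξ
  rw [← hgc, Function.comp_apply] at hsg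
  have hval := congrFun heq ξ
  have key : ξ ∈ E.sets (A ∩ B) ↔ E.star (chi E A) ξ = E.star g ξ := by
    constructor
    · intro hm
      have hmv : E.star (chi E (A ∩ B)) ξ = E.incl E.one := (mem_sets E).mp hm
      rw [hval] at hmv
      by_contra hc
      rw [if_neg hc] at hmv
      exact E.zero_ne_one (E.incl_injective hmv)
    · intro hc
      refine (mem_sets E).mpr ?_
      rw [hval, if_pos hc]
  by_cases hB : ξ ∈ E.sets B
  · have hBv : E.star (chi E B) ξ = E.incl E.one := (mem_sets E).mp hB
    have hgv : E.star g ξ = E.incl E.one := by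
      rw [hsg, hBv, E.star_incl, show σ E.one = E.one from if_pos rfl]
    simp only [Set.mem_inter_iff, hB, and_true]
    rw [key, hgv, ← mem_sets]
  · have hBv := star_chi_of_not_mem E hB
    have hgv : E.star g ξ = E.incl t := by
      rw [hsg, hBv, E.star_incl, show σ E.zero = t from if_neg E.zero_ne_one]
    simp only [Set.mem_inter_iff, hB, and_false, iff_false]
    rw [key, hgv]
    intro hc
    rcases star_chi_eq E A ξ with h2 | h2 <;> rw [h2] at hc
    · exact ht1 (E.incl_injective hc).symm
    · exact ht0 (E.incl_injective hc).symm

private lemma sets_inter_two (h2 : ∀ x : X, x = E.zero ∨ x = E.one) (A B : Set X) :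
    E.sets (A ∩ B) = E.sets A ∩ E.sets B := by
  have tri : ∀ C D : Set X, C ⊆ D ∨ D ⊆ C ∨ D = Cᶜ := by
    intro C D
    by_cases hCz : E.zero ∈ C <;> by_cases hCo : E.one ∈ C <;>
      by_cases hDz : E.zero ∈ D <;> by_cases hDo : E.one ∈ D <;>
      first
        | (left; intro x hx; rcases h2 x with rfl | rfl <;> tauto)
        | (right; left; intro x hx; rcases h2 x with rfl | rfl <;> tauto)
        | (right; right; ext x; rcases h2 x with rfl | rfl <;> tauto)
  have cls : ∀ C D : Set X, C ⊆ D → C = ∅ ∨ D = Set.univ ∨ C = D := by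
    intro C D hCD
    by_cases hCz : E.zero ∈ C <;> by_cases hCo : E.one ∈ C <;>
      by_cases hDz : E.zero ∈ D <;> by_cases hDo : E.one ∈ D <;>
      first
        | exact absurd (hCD hCz) hDz
        | exact absurd (hCD hCo) hDo
        | (left; ext x; rcases h2 x with rfl | rfl <;> tauto)
        | (right; left; ext x; rcases h2 x with rfl | rfl <;> tauto)
        | (right; right; ext x; rcases h2 x with rfl | rfl <;> tauto)
  have mono : ∀ C D : Set X, C ⊆ D → E.sets (C ∩ D) = E.sets C ∩ E.sets D := by
    intro C D hCD
    rcases cls C D hCD with rfl | rfl | rfl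
    · rw [Set.empty_inter, sets_empty, Set.empty_inter]
    · rw [Set.inter_univ, sets_univ, Set.inter_univ]
    · rw [Set.inter_self, Set.inter_self]
  rcases tri A B with h | h | h
  · exact mono A B h
  · rw [Set.inter_comm, Set.inter_comm (E.sets A)]
    exact mono B A h
  · subst h
    rw [Set.inter_compl_self, sets_empty, sets_compl, Set.inter_compl_self]

private lemma sets_inter (A B : Set X) : E.sets (A ∩ B) = E.sets A ∩ E.sets B := by
  by_cases h : ∃ t : X, t ≠ E.zero ∧ t ≠ E.one
  · obtain ⟨t, ht0, ht1⟩ := h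
    exact sets_inter_aux E ht0 ht1 A B
  · push_neg at h
    refine sets_inter_two E (fun x => ?_) A B
    by_cases hx : x = E.zero
    · exact Or.inl hx
    · exact Or.inr (h x hx)

private lemma sets_union (A B : Set X) : E.sets (A ∪ B) = E.sets A ∪ E.sets B := by
  have h : A ∪ B = (Aᶜ ∩ Bᶜ)ᶜ := by rw [Set.compl_inter, compl_compl, compl_compl]
  rw [h, sets_compl, sets_inter, sets_compl, sets_compl, Set.compl_inter, compl_compl,
    compl_compl]

end FunctionalExtension

end Helpers

/-- The map `A ↦ *A` is an injective Boolean homomorphism from `𝒫(X)` to subsets of `Y`: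
it preserves intersections, unions, complements, `∅` and `X` (sent to `Y`),
and `*A ∩ X = A`. -/
theorem stmt2 {X Y : Type*} (E : FunctionalExtension X Y) :
    Function.Injective E.sets ∧
    (∀ A B : Set X, E.sets (A ∩ B) = E.sets A ∩ E.sets B) ∧
    (∀ A B : Set X, E.sets (A ∪ B) = E.sets A ∪ E.sets B) ∧
    (∀ A : Set X, E.sets Aᶜ = (E.sets A)ᶜ) ∧
    E.sets (∅ : Set X) = (∅ : Set Y) ∧
    E.sets (Set.univ : Set X) = (Set.univ : Set Y) ∧
    (∀ A : Set X, E.sets A ∩ Set.range E.incl = E.incl '' A) := by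
  refine ⟨?_, E.sets_inter, E.sets_union, E.sets_compl, E.sets_empty, E.sets_univ, ?_⟩
  · intro A B hAB
    ext x
    rw [← E.incl_mem_sets_iff A x, ← E.incl_mem_sets_iff B x, hAB]
  · intro A
    ext η
    constructor
    · rintro ⟨hm, x, rfl⟩
      exact ⟨x, (E.incl_mem_sets_iff A x).mp hm, rfl⟩
    · rintro ⟨x, hx, rfl⟩
      exact ⟨(E.incl_mem_sets_iff A x).mpr hx, x, rfl⟩
end

section
/- Let Y be a functional extension of X. Then for every function f : X → X and every subset A ⊆ X, one has (f*)⁻¹(*A) = *(f⁻¹(A)). Consequently, every extended function f* : Y → Y is continuous with respect to the S-topology on Y. -/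
attribute [local instance] Classical.propDecidable

/-- For every `f : X → X` and `A ⊆ X`, `(f*)⁻¹(*A) = *(f⁻¹(A))`; consequently every
extended function `f* : Y → Y` is continuous with respect to the S-topology. -/
theorem stmt3 {X Y : Type*} (E : FunctionalExtension X Y) (f : X → X) :
    (∀ A : Set X, E.star f ⁻¹' E.sets A = E.sets (f ⁻¹' A)) ∧
    @Continuous Y Y E.sTopology E.sTopology (E.star f) := by
  have key : ∀ A : Set X, E.star f ⁻¹' E.sets A = E.sets (f ⁻¹' A) := by
    intro A
    ext ξ
    simp only [Set.mem_preimage, FunctionalExtension.sets, Set.mem_setOf_eq]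
    have h := congrFun (E.comp f (fun x => if x ∈ A then E.one else E.zero)) ξ
    have : ((fun x => if x ∈ A then E.one else E.zero) ∘ f) =
        (fun x => if x ∈ f ⁻¹' A then E.one else E.zero) := rfl
    rw [this] at h
    simp only [Function.comp_apply] at h
    rw [← h]
    exact Iff.rfl
  refine ⟨key, ?_⟩
  letI := E.sTopology
  refine continuous_generateFrom_iff.mpr ?_
  rintro s ⟨A, rfl⟩
  rw [key A]
  exact TopologicalSpace.GenerateOpen.basic _ ⟨_, rfl⟩
end

section
/- Let Y be a functional extension of X and let f : X → X. If f is injective then f* : Y → Y is injective; if f is surjective then f* is surjective; and if f is the constant function with value c ∈ X, then f* is the constant function on Y with value c. -/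
attribute [local instance] Classical.propDecidable

theorem FunctionalExtension.star_id {X Y : Type*} (E : FunctionalExtension X Y) (ξ : Y) :
    E.star id ξ = ξ := by
  obtain ⟨p₁, p₂, ζ, h₁, h₂⟩ := E.dir ξ ξ
  have : E.star (id ∘ p₁) ζ = ξ := by simpa using h₁
  rw [E.comp] at this
  simpa [h₁] using this

/-- If `f` is injective then `f*` is injective; if `f` is surjective then `f*` is
surjective; if `f` is constant with value `c` then `f*` is constant with value `c`. -/
theorem stmt4 {X Y : Type*} (E : FunctionalExtension X Y) (f : X → X) :
    (Function.Injective f → Function.Injective (E.star f)) ∧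
    (Function.Surjective f → Function.Surjective (E.star f)) ∧
    (∀ c : X, (∀ x : X, f x = c) → ∀ ξ : Y, E.star f ξ = E.incl c) := by
  refine ⟨?_, ?_, ?_⟩
  · intro hf
    set g : X → X := fun y => if h : ∃ x, f x = y then h.choose else E.zero with hg
    have hgf : g ∘ f = id := by
      funext x
      have hex : ∃ x', f x' = f x := ⟨x, rfl⟩
      simp only [hg, Function.comp_apply, dif_pos hex, id]
      exact hf hex.choose_spec
    intro ξ η h
    have : E.star (g ∘ f) ξ = E.star (g ∘ f) η := by
      rw [E.comp]; simp [Function.comp, h]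
    rwa [hgf, E.star_id, E.star_id] at this
  · intro hf ξ
    set s : X → X := fun y => (hf y).choose with hs
    have hfs : f ∘ s = id := by
      funext y
      exact (hf y).choose_spec
    refine ⟨E.star s ξ, ?_⟩
    have := congrArg (fun h => E.star h ξ) hfs
    simp only [E.comp] at this
    simpa [Function.comp, E.star_id] using this
  · intro c hc ξ
    obtain ⟨p₁, p₂, ζ, h₁, h₂⟩ := E.dir ξ (E.incl c)
    have h3 : f ∘ p₁ = f ∘ p₂ := by funext x; simp [Function.comp, hc]
    have := congrArg (fun h => E.star h ζ) h3
    simp only [E.comp] at this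
    simp only [Function.comp_apply, h₁, h₂] at this
    rw [this, E.star_incl, hc]
end

section
/- Let Y be a functional extension of X. Then Y satisfies the principle Ind (for all distinct ξ, η ∈ Y there exist disjoint subsets A, B ⊆ X with ξ ∈ *A and η ∈ *B) if and only if the S-topology on Y is Hausdorff. -/
attribute [local instance] Classical.propDecidable

section Helpers

variable {X Y : Type*} (E : FunctionalExtension X Y)

lemma my_star_id : E.star id = id := by
  funext ξ
  obtain ⟨p, q, ζ, hp, -⟩ := E.dir ξ ξ
  have h := congrFun (E.comp p id) ζ
  rw [Function.id_comp] at h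
  rw [← hp]
  simpa [Function.comp] using h.symm

lemma my_star_const (c : X) (ξ : Y) : E.star (fun _ => c) ξ = E.incl c := by
  have h1 : E.star (fun _ => E.one) ξ = E.incl E.one := by
    have h := congrFun (E.equ id id) ξ
    simpa using h
  have h2 := congrFun (E.comp (fun _ => E.one) (fun _ => c)) ξ
  have h3 : ((fun (_ : X) => c) ∘ (fun (_ : X) => E.one)) = fun _ => c := rfl
  rw [h3] at h2
  rw [h2, Function.comp_apply, h1, E.star_incl]

lemma my_mem_sets_iff (f g : X → X) (A : Set X) (hA : ∀ x, f x = g x ↔ x ∈ A) (ξ : Y) :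
    ξ ∈ E.sets A ↔ E.star f ξ = E.star g ξ := by
  have hχ : (fun x => if x ∈ A then E.one else E.zero)
      = (fun x => if f x = g x then E.one else E.zero) := by
    funext x
    by_cases h : x ∈ A
    · rw [if_pos h, if_pos ((hA x).mpr h)]
    · rw [if_neg h, if_neg (fun hc => h ((hA x).mp hc))]
  show E.star _ ξ = E.incl E.one ↔ _
  rw [hχ, congrFun (E.equ f g) ξ]
  constructor
  · intro h
    by_contra hne
    rw [if_neg hne] at h
    exact E.zero_ne_one (E.incl_injective h)
  · intro h
    rw [if_pos h]

lemma my_incl_mem_sets {A : Set X} {z : X} (hz : z ∈ A) : E.incl z ∈ E.sets A := by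
  show E.star _ (E.incl z) = _
  rw [E.star_incl, if_pos hz]

lemma my_mem_sets_univ (ξ : Y) : ξ ∈ E.sets (Set.univ : Set X) :=
  (my_mem_sets_iff E id id Set.univ (fun x => by simp) ξ).mpr rfl

lemma my_mem_sets_inter {A B : Set X} {ξ : Y} (hA : ξ ∈ E.sets A) (hB : ξ ∈ E.sets B) :
    ξ ∈ E.sets (A ∩ B) := by
  by_cases hBA : B ⊆ A
  · rwa [Set.inter_eq_right.mpr hBA]
  obtain ⟨cB, hcBB, hcBA⟩ := Set.not_subset.mp hBA
  rcases (A ∩ B).eq_empty_or_nonempty with hE | ⟨cA, hcAA, hcAB⟩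
  · -- disjoint case: derive a contradiction
    exfalso
    have hAne : A.Nonempty := by
      rcases A.eq_empty_or_nonempty with h | h
      · subst h
        have := (my_mem_sets_iff E (fun _ => E.zero) (fun _ => E.one) ∅
          (fun x => by simp [E.zero_ne_one]) ξ).mp hA
        rw [my_star_const, my_star_const] at this
        exact (E.zero_ne_one (E.incl_injective this)).elim
      · exact h
    obtain ⟨cA, hcAA⟩ := hAne
    have hcAB : cA ∉ B := fun h => (Set.eq_empty_iff_forall_notMem.mp hE cA) ⟨hcAA, h⟩
    set gA : X → X := fun y => if y ∈ A then y else cA with hgA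
    set gB : X → X := fun y => if y ∈ B then y else cB with hgB
    have hgAeq : ∀ y, gA y = id y ↔ y ∈ A := by
      intro y
      by_cases h : y ∈ A
      · simp [hgA, h]
      · simp only [hgA, if_neg h, id]
        exact ⟨fun hc => absurd (hc ▸ hcAA) h, fun hc => absurd hc h⟩
    have hgBeq : ∀ y, gB y = id y ↔ y ∈ B := by
      intro y
      by_cases h : y ∈ B
      · simp [hgB, h]
      · simp only [hgB, if_neg h, id]
        exact ⟨fun hc => absurd (hc ▸ hcBB) h, fun hc => absurd hc h⟩
    have hsA : E.star gA ξ = ξ := by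
      have := (my_mem_sets_iff E gA id A hgAeq ξ).mp hA
      rwa [my_star_id] at this
    have hsB : E.star gB ξ = ξ := by
      have := (my_mem_sets_iff E gB id B hgBeq ξ).mp hB
      rwa [my_star_id] at this
    have hcomp : E.star (gA ∘ gB) ξ = ξ := by
      rw [E.comp gB gA, Function.comp_apply, hsB, hsA]
    have hsingle : ξ ∈ E.sets {cA} := by
      rw [my_mem_sets_iff E (gA ∘ gB) id {cA} ?_ ξ, my_star_id]
      · exact hcomp
      · intro y
        simp only [Function.comp_apply, id, Set.mem_singleton_iff]
        by_cases hy : y ∈ B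
        · have hyA : y ∉ A := fun h => (Set.eq_empty_iff_forall_notMem.mp hE y) ⟨h, hy⟩
          rw [hgB]; simp only [if_pos hy]
          rw [hgA]; simp only [if_neg hyA]
          constructor
          · intro h; exact absurd (h ▸ hy) hcAB
          · intro h; exact absurd (h ▸ hy) hcAB
        · rw [hgB]; simp only [if_neg hy]
          rw [hgA]; simp only [if_neg hcBA]
          exact eq_comm
    have hξ : ξ = E.incl cA := by
      have := (my_mem_sets_iff E (fun _ => cA) id {cA}
        (fun y => by simp [id, eq_comm, Set.mem_singleton_iff]) ξ).mp hsingle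
      rw [my_star_id, my_star_const] at this
      exact this.symm
    -- but ξ ∈ E.sets B forces cA ∈ B
    rw [hξ] at hB
    have : E.incl (if cA ∈ B then E.one else E.zero) = E.incl E.one := by
      have := hB
      rwa [FunctionalExtension.sets, Set.mem_setOf_eq, E.star_incl] at this
    rw [if_neg hcAB] at this
    exact E.zero_ne_one (E.incl_injective this)
  · -- cA ∈ A ∩ B
    set gA : X → X := fun y => if y ∈ A then y else cA with hgA
    set gB : X → X := fun y => if y ∈ B then y else cB with hgB
    have hgAeq : ∀ y, gA y = id y ↔ y ∈ A := by
      intro y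
      by_cases h : y ∈ A
      · simp [hgA, h]
      · simp only [hgA, if_neg h, id]
        exact ⟨fun hc => absurd (hc ▸ hcAA) h, fun hc => absurd hc h⟩
    have hgBeq : ∀ y, gB y = id y ↔ y ∈ B := by
      intro y
      by_cases h : y ∈ B
      · simp [hgB, h]
      · simp only [hgB, if_neg h, id]
        exact ⟨fun hc => absurd (hc ▸ hcBB) h, fun hc => absurd hc h⟩
    have hsA : E.star gA ξ = ξ := by
      have := (my_mem_sets_iff E gA id A hgAeq ξ).mp hA
      rwa [my_star_id] at this
    have hsB : E.star gB ξ = ξ := by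
      have := (my_mem_sets_iff E gB id B hgBeq ξ).mp hB
      rwa [my_star_id] at this
    have hcomp : E.star (gA ∘ gB) ξ = ξ := by
      rw [E.comp gB gA, Function.comp_apply, hsB, hsA]
    rw [my_mem_sets_iff E (gA ∘ gB) id (A ∩ B) ?_ ξ, my_star_id]
    · exact hcomp
    · intro y
      simp only [Function.comp_apply, id, Set.mem_inter_iff]
      by_cases hy : y ∈ B
      · rw [hgB]; simp only [if_pos hy]
        by_cases hyA : y ∈ A
        · rw [hgA]; simp only [if_pos hyA]
          simp [hyA, hy]
        · rw [hgA]; simp only [if_neg hyA]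
          constructor
          · intro h; exact absurd (h ▸ hcAA) hyA
          · intro h; exact absurd h.1 hyA
      · rw [hgB]; simp only [if_neg hy]
        rw [hgA]; simp only [if_neg hcBA]
        constructor
        · intro h; exact absurd (h ▸ hcAB) hy
        · intro h; exact absurd h.2 hy

lemma my_sInter_lemma (f : Set (Set Y)) (hfin : f.Finite) :
    f ⊆ Set.range E.sets →
    ∀ ξ : Y, ξ ∈ ⋂₀ f → ∃ A : Set X, ξ ∈ E.sets A ∧ ∀ z ∈ A, E.incl z ∈ ⋂₀ f := by
  refine Set.Finite.induction_on (motive := fun f _ => f ⊆ Set.range E.sets →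
    ∀ ξ : Y, ξ ∈ ⋂₀ f → ∃ A : Set X, ξ ∈ E.sets A ∧ ∀ z ∈ A, E.incl z ∈ ⋂₀ f)
    f hfin ?_ ?_
  · intro _ ξ _
    exact ⟨Set.univ, my_mem_sets_univ E ξ, fun z _ => by simp⟩
  · intro s t hst htfin ih hsub ξ hξ
    rw [Set.sInter_insert] at hξ
    obtain ⟨B, hB⟩ := hsub (Set.mem_insert s t)
    obtain ⟨A, hA, hAmem⟩ := ih (fun u hu => hsub (Set.mem_insert_of_mem s hu)) ξ hξ.2
    refine ⟨A ∩ B, my_mem_sets_inter E hA (hB ▸ hξ.1), fun z hz => ?_⟩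
    rw [Set.sInter_insert]
    exact ⟨hB ▸ my_incl_mem_sets E hz.2, hAmem z hz.1⟩


end Helpers

/-- A functional extension satisfies the principle Ind (distinct points of `Y` are
separated by star-extensions of disjoint subsets of `X`) if and only if its S-topology
is Hausdorff. -/

theorem stmt8 {X Y : Type*} (E : FunctionalExtension X Y) :
    (∀ ξ η : Y, ξ ≠ η →
      ∃ A B : Set X, Disjoint A B ∧ ξ ∈ E.sets A ∧ η ∈ E.sets B) ↔
    @T2Space Y E.sTopology := by
  letI := E.sTopology
  constructor
  · intro h
    refine ⟨fun ξ η hne => ?_⟩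
    obtain ⟨A, B, hdisj, hξ, hη⟩ := h ξ η hne
    refine ⟨E.sets A, E.sets B,
      TopologicalSpace.isOpen_generateFrom_of_mem ⟨A, rfl⟩,
      TopologicalSpace.isOpen_generateFrom_of_mem ⟨B, rfl⟩, hξ, hη, ?_⟩
    rw [Set.disjoint_left]
    intro ζ hζA hζB
    have h1 := my_mem_sets_inter E hζA hζB
    rw [Set.disjoint_iff_inter_eq_empty.mp hdisj] at h1
    have h2 := (my_mem_sets_iff E (fun _ => E.zero) (fun _ => E.one) ∅
      (fun x => by simp [E.zero_ne_one]) ζ).mp h1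
    rw [my_star_const, my_star_const] at h2
    exact E.zero_ne_one (E.incl_injective h2)
  · intro h ξ η hne
    obtain ⟨u, v, hu, hv, hξu, hηv, huv⟩ := t2_separation hne
    have hbasis := TopologicalSpace.isTopologicalBasis_of_subbasis
      (s := Set.range E.sets) (rfl : E.sTopology = _)
    obtain ⟨bu, hbu, hξbu, hbuu⟩ := hbasis.exists_subset_of_mem_open hξu hu
    obtain ⟨bv, hbv, hηbv, hbvv⟩ := hbasis.exists_subset_of_mem_open hηv hv
    obtain ⟨fu, ⟨hfufin, hfusub⟩, hfu⟩ := hbu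
    obtain ⟨fv, ⟨hfvfin, hfvsub⟩, hfv⟩ := hbv
    have hfu' : ⋂₀ fu = bu := hfu
    have hfv' : ⋂₀ fv = bv := hfv
    rw [← hfu'] at hξbu hbuu
    rw [← hfv'] at hηbv hbvv
    obtain ⟨A, hA, hAmem⟩ := my_sInter_lemma E fu hfufin hfusub ξ hξbu
    obtain ⟨B, hB, hBmem⟩ := my_sInter_lemma E fv hfvfin hfvsub η hηbv
    refine ⟨A, B, ?_, hA, hB⟩
    rw [Set.disjoint_left]
    intro z hzA hzB
    exact Set.disjoint_left.mp huv (hbuu (hAmem z hzA)) (hbvv (hBmem z hzB))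
end

section
/- Let X be a set, let f, g : X → X, and let U be an ultrafilter on X. If g has finite range, then Ultrafilter.map f U = Ultrafilter.map g U holds if and only if the equalizer {x ∈ X : f x = g x} belongs to U. -/
/-- If `g` has finite range, then `Ultrafilter.map f U = Ultrafilter.map g U` iff the
equalizer `{x : f x = g x}` belongs to `U`. -/
theorem stmt15 {X : Type*} (f g : X → X) (U : Ultrafilter X)
    (hg : (Set.range g).Finite) :
    Ultrafilter.map f U = Ultrafilter.map g U ↔ {x : X | f x = g x} ∈ U := by
  constructor
  · intro h
    have hmem : Set.range g ∈ Ultrafilter.map g U := by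
      apply Filter.mem_map_iff_exists_image.2
      exact ⟨Set.univ, Filter.univ_mem, Set.image_subset_range _ _⟩
    obtain ⟨y, -, hy⟩ := Ultrafilter.eq_pure_of_finite_mem hg hmem
    have hf : {y} ∈ Ultrafilter.map f U := by rw [h, hy]; exact rfl
    have hgy : {y} ∈ Ultrafilter.map g U := by rw [hy]; exact rfl
    have := Filter.inter_mem (Ultrafilter.mem_map.1 hf) (Ultrafilter.mem_map.1 hgy)
    refine Filter.mem_of_superset this ?_
    rintro x ⟨hx1, hx2⟩
    simp only [Set.mem_preimage, Set.mem_singleton_iff] at hx1 hx2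
    simp [Set.mem_setOf_eq, hx1, hx2]
  · intro h
    exact Ultrafilter.coe_injective (Filter.map_congr h)
end

section
/- Let X be an infinite set, let U be a nonprincipal ultrafilter on X, let δ : X ≃ X × X be a bijection, and let V be the ultrafilter on X defined by S ∈ V iff δ(S) ∈ U ⊗ U. Set p₁ = π₁ ∘ δ and p₂ = π₂ ∘ δ, where π₁, π₂ : X × X → X are the projections. Then Ultrafilter.map p₁ V = U = Ultrafilter.map p₂ V, but the equalizer {x ∈ X : p₁ x = p₂ x} does not belong to V. In particular, V is not a Hausdorff ultrafilter, and hence every infinite set carries a non-Hausdorff ultrafilter. -/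
/-- An ultrafilter `U` on `X` is Hausdorff if for all `f, g : X → X`,
`map f U = map g U` holds iff the equalizer of `f` and `g` belongs to `U`. -/
def IsHausdorffUltrafilter {X : Type*} (U : Ultrafilter X) : Prop :=
  ∀ f g : X → X,
    Ultrafilter.map f U = Ultrafilter.map g U ↔ {x : X | f x = g x} ∈ U

/-- The tensor product `U ⊗ W` of two ultrafilters on `X`: the ultrafilter on `X × X`
with `S ∈ U ⊗ W` iff `{x : {y : (x, y) ∈ S} ∈ W} ∈ U`. -/
def Ultrafilter.tensor {X : Type*} (U W : Ultrafilter X) : Ultrafilter (X × X) :=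
  U.bind fun x => W.map fun y => (x, y)

lemma mem_tensor {X : Type*} (U W : Ultrafilter X) (S : Set (X × X)) :
    S ∈ Ultrafilter.tensor U W ↔ {x : X | {y : X | (x, y) ∈ S} ∈ W} ∈ U := by
  rfl

/-- Let `U` be a nonprincipal ultrafilter on an infinite set `X`, `δ : X ≃ X × X` a
bijection, and `V` the ultrafilter with `S ∈ V ↔ δ(S) ∈ U ⊗ U`. With `p₁ = π₁ ∘ δ` and
`p₂ = π₂ ∘ δ`, one has `map p₁ V = U = map p₂ V` but `{x : p₁ x = p₂ x} ∉ V`; hence `V`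
is not Hausdorff, and every infinite set carries a non-Hausdorff ultrafilter. -/
theorem stmt16 {X : Type*} [Infinite X] (U : Ultrafilter X)
    (hU : ∀ x : X, U ≠ pure x) (δ : X ≃ X × X) (V : Ultrafilter X)
    (hV : ∀ S : Set X, S ∈ V ↔ (δ '' S) ∈ Ultrafilter.tensor U U) :
    Ultrafilter.map (fun x => (δ x).1) V = U ∧
    Ultrafilter.map (fun x => (δ x).2) V = U ∧
    {x : X | (δ x).1 = (δ x).2} ∉ V ∧
    ¬ IsHausdorffUltrafilter V ∧
    ∃ W : Ultrafilter X, ¬ IsHausdorffUltrafilter W := by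
  have himg : ∀ S : Set X, δ '' S = δ.symm ⁻¹' S := fun S => δ.image_eq_preimage_symm S
  have h1 : Ultrafilter.map (fun x => (δ x).1) V = U := by
    ext A
    rw [Ultrafilter.mem_map, hV, himg, mem_tensor]
    have : {x : X | {y : X | (x, y) ∈ δ.symm ⁻¹' ((fun x => (δ x).1) ⁻¹' A)} ∈ U} = A := by
      ext x
      simp only [Set.mem_preimage, Equiv.apply_symm_apply, Set.mem_setOf_eq]
      by_cases h : x ∈ A <;> simp only [h, Set.setOf_true, Set.setOf_false] <;> simp only [iff_true, iff_false] <;> first | exact Filter.univ_mem | exact Ultrafilter.empty_notMem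
    rw [this]
  have h2 : Ultrafilter.map (fun x => (δ x).2) V = U := by
    ext A
    rw [Ultrafilter.mem_map, hV, himg, mem_tensor]
    have : {x : X | {y : X | (x, y) ∈ δ.symm ⁻¹' ((fun x => (δ x).2) ⁻¹' A)} ∈ U}
        = {_x : X | A ∈ U} := by
      ext x
      simp [Set.setOf_mem_eq]
    rw [this]
    by_cases h : A ∈ U <;> simp only [h, Set.setOf_true, Set.setOf_false] <;> simp only [iff_true, iff_false] <;> first | exact Filter.univ_mem | exact Ultrafilter.empty_notMem
  have h3 : {x : X | (δ x).1 = (δ x).2} ∉ V := by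
    rw [hV, himg, mem_tensor]
    have : {x : X | {y : X | (x, y) ∈ δ.symm ⁻¹' {x : X | (δ x).1 = (δ x).2}} ∈ U}
        = ∅ := by
      ext x
      simp only [Set.mem_setOf_eq, Set.mem_preimage, Equiv.apply_symm_apply, Set.mem_empty_iff_false,
        iff_false]
      intro h
      have : {y : X | x = y} = {x} := by ext y; simp [eq_comm]
      rw [this] at h
      obtain ⟨y, hy, hUy⟩ := Ultrafilter.eq_pure_of_finite_mem (Set.finite_singleton x) h
      exact hU x (hy ▸ hUy)
    rw [this]
    exact Ultrafilter.empty_notMem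
  have h4 : ¬ IsHausdorffUltrafilter V := by
    intro h
    exact h3 ((h (fun x => (δ x).1) (fun x => (δ x).2)).mp (h1.trans h2.symm))
  exact ⟨h1, h2, h3, h4, V, h4⟩
end

section
/- Let Y be a weak functional extension of X whose S-topology is both Hausdorff and quasi-compact. Then for every ξ ∈ Y the family U_ξ = {A ⊆ X : ξ ∈ *A} is an ultrafilter on X, and the map υ : Y → Ultrafilter(X) defined by υ(ξ) = U_ξ is a homeomorphism from Y with the S-topology onto the space Ultrafilter(X) of all ultrafilters on X equipped with its Stone topology (whose basic open sets are O_A = {V : A ∈ V} for A ⊆ X). Moreover, for every function f : X → X and every ξ ∈ Y, one has Ultrafilter.map f (υ ξ) = υ(f* ξ). -/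
attribute [local instance] Classical.propDecidable

/-- A weak functional extension of `X`: a superset `Y ⊇ X` (given via an injective
inclusion) with two designated distinct elements `0, 1 ∈ X`, together with a
distinguished extension `star f : Y → Y` of every `f : X → X`, preserving compositions,
weakly preserving equalizers (only when one of the two functions is injective or has
finite range), and with directed Puritz preorder. -/
structure WeakFunctionalExtension (X Y : Type*) where
  zero : X
  one : X
  zero_ne_one : zero ≠ one
  incl : X → Y
  incl_injective : Function.Injective incl
  star : (X → X) → Y → Y
  star_incl : ∀ (f : X → X) (x : X), star f (incl x) = incl (f x)
  comp : ∀ f g : X → X, star (g ∘ f) = star g ∘ star f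
  wequ : ∀ f g : X → X,
    (Function.Injective f ∨ (Set.range f).Finite ∨
      Function.Injective g ∨ (Set.range g).Finite) →
    star (fun x => if f x = g x then one else zero) =
      fun ξ => if star f ξ = star g ξ then incl one else incl zero
  dir : ∀ ξ η : Y, ∃ (p₁ p₂ : X → X) (ζ : Y), star p₁ ζ = ξ ∧ star p₂ ζ = η

namespace WeakFunctionalExtension

variable {X Y : Type*}

/-- The star-extension `*A ⊆ Y` of a subset `A ⊆ X`. -/
def sets (E : WeakFunctionalExtension X Y) (A : Set X) : Set Y :=
  {ξ | E.star (fun x => if x ∈ A then E.one else E.zero) ξ = E.incl E.one}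

/-- The S-topology on `Y`: the topology with basis `{*A : A ⊆ X}`. -/
def sTopology (E : WeakFunctionalExtension X Y) : TopologicalSpace Y :=
  TopologicalSpace.generateFrom (Set.range E.sets)

end WeakFunctionalExtension

namespace WFEAux

variable {X Y : Type*} (E : WeakFunctionalExtension X Y)

/-- characteristic function -/
noncomputable def chi (A : Set X) : X → X := fun x => if x ∈ A then E.one else E.zero

lemma mem_sets_iff (A : Set X) (ξ : Y) :
    ξ ∈ E.sets A ↔ E.star (chi E A) ξ = E.incl E.one := Iff.rfl

lemma i0_ne_i1 : E.incl E.zero ≠ E.incl E.one :=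
  fun h => E.zero_ne_one (E.incl_injective h)

lemma chi_range_finite (A : Set X) : (Set.range (chi E A)).Finite := by
  apply Set.Finite.subset ((Set.finite_singleton E.zero).insert E.one)
  rintro y ⟨x, rfl⟩
  by_cases h : x ∈ A <;> simp [chi, h]

lemma star_one (ξ : Y) : E.star (fun _ => E.one) ξ = E.incl E.one := by
  have h := E.wequ id id (Or.inl Function.injective_id)
  have h2 : (fun x : X => if id x = id x then E.one else E.zero) = fun _ => E.one := by
    funext x; simp
  rw [h2] at h
  rw [h]
  simp

lemma star_const (a : X) (ξ : Y) : E.star (fun _ => a) ξ = E.incl a := by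
  have : (fun _ : X => a) = (fun _ : X => a) ∘ (fun _ : X => E.one) := rfl
  rw [this, E.comp]
  simp only [Function.comp_apply, star_one]
  rw [E.star_incl]

/-- the equalizer lemma, restated -/
lemma star_eqset (f g : X → X)
    (h : Function.Injective f ∨ (Set.range f).Finite ∨
      Function.Injective g ∨ (Set.range g).Finite) (ξ : Y) :
    ξ ∈ E.sets {x | f x = g x} ↔ E.star f ξ = E.star g ξ := by
  have h1 := E.wequ f g h
  have h2 : (fun x : X => if f x = g x then E.one else E.zero)
      = chi E {x | f x = g x} := by
    funext x; simp [chi, Set.mem_setOf_eq]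
  rw [h2] at h1
  rw [mem_sets_iff, congrFun h1 ξ]
  by_cases hc : E.star f ξ = E.star g ξ
  · simp [hc]
  · simp only [if_neg hc]
    simp [hc]
    exact fun hh => i0_ne_i1 E hh

lemma star_chi_cases (A : Set X) (ξ : Y) :
    E.star (chi E A) ξ = E.incl E.one ∨ E.star (chi E A) ξ = E.incl E.zero := by
  have h1 := E.wequ (chi E A) (fun _ => E.one)
    (Or.inr (Or.inl (chi_range_finite E A)))
  have h2 : (fun x : X => if chi E A x = E.one then E.one else E.zero) = chi E A := by
    funext x
    by_cases h : x ∈ A <;> simp [chi, h, E.zero_ne_one]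
  rw [h2] at h1
  have h3 := congrFun h1 ξ
  rw [star_one] at h3
  by_cases hc : E.star (chi E A) ξ = E.incl E.one
  · exact Or.inl hc
  · right; rw [h3, if_neg hc]

lemma not_mem_sets_iff (A : Set X) (ξ : Y) :
    ξ ∉ E.sets A ↔ E.star (chi E A) ξ = E.incl E.zero := by
  rcases star_chi_cases E A ξ with h | h
  · simp [mem_sets_iff, h]
    exact fun hh => i0_ne_i1 E hh.symm
  · simp [mem_sets_iff, h]
    exact fun hh => i0_ne_i1 E hh

lemma not_mem_empty (ξ : Y) : ξ ∉ E.sets (∅ : Set X) := by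
  rw [not_mem_sets_iff]
  have : chi E (∅ : Set X) = fun _ => E.zero := by funext x; simp [chi]
  rw [this, star_const]

lemma mem_univ (ξ : Y) : ξ ∈ E.sets (Set.univ : Set X) := by
  rw [mem_sets_iff]
  have : chi E (Set.univ : Set X) = fun _ => E.one := by funext x; simp [chi]
  rw [this, star_one]

/-- star-equality of characteristic functions in terms of membership -/
lemma star_chi_eq_iff (A B : Set X) (ξ : Y) :
    E.star (chi E A) ξ = E.star (chi E B) ξ ↔ (ξ ∈ E.sets A ↔ ξ ∈ E.sets B) := by
  rcases star_chi_cases E A ξ with hA | hA <;> rcases star_chi_cases E B ξ with hB | hB <;>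
    simp [mem_sets_iff, hA, hB, i0_ne_i1 E, (i0_ne_i1 E).symm]

lemma eqset_chi (A B : Set X) (ξ : Y) :
    ξ ∈ E.sets {x | chi E A x = chi E B x} ↔ (ξ ∈ E.sets A ↔ ξ ∈ E.sets B) := by
  rw [star_eqset E _ _ (Or.inr (Or.inl (chi_range_finite E A))), star_chi_eq_iff]

lemma chi_eq_chi_iff (A B : Set X) (x : X) :
    chi E A x = chi E B x ↔ (x ∈ A ↔ x ∈ B) := by
  by_cases hA : x ∈ A <;> by_cases hB : x ∈ B <;>
    simp [chi, hA, hB, E.zero_ne_one, E.zero_ne_one.symm]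

lemma mem_compl_iff (A : Set X) (ξ : Y) : ξ ∈ E.sets Aᶜ ↔ ξ ∉ E.sets A := by
  have h : {x | chi E A x = chi E Aᶜ x} = (∅ : Set X) := by
    ext x
    simp [chi_eq_chi_iff]
  have h2 := eqset_chi E A Aᶜ ξ
  rw [h] at h2
  have h3 := not_mem_empty E ξ
  tauto

lemma mem_union_disjoint (A B : Set X) (hd : A ∩ B = ∅) (ξ : Y)
    (hA : ξ ∉ E.sets A) (hB : ξ ∉ E.sets B) : ξ ∉ E.sets (A ∪ B) := by
  have h : {x | chi E A x = chi E (A ∪ B) x} = Bᶜ := by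
    ext x
    rw [Set.mem_setOf_eq, chi_eq_chi_iff]
    have hdx : x ∈ A → x ∉ B := fun h1 h2 =>
      Set.eq_empty_iff_forall_notMem.mp hd x ⟨h1, h2⟩
    simp only [Set.mem_union, Set.mem_compl_iff]
    tauto
  have h2 := eqset_chi E A (A ∪ B) ξ
  rw [h] at h2
  rw [mem_compl_iff] at h2
  tauto

/-- for a finite-range function, the star value at ξ determines membership in fibers -/
lemma mem_fiber_iff (f : X → X) (hf : (Set.range f).Finite) (r : X) (ξ : Y) :
    ξ ∈ E.sets {x | f x = r} ↔ E.star f ξ = E.incl r := by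
  have := star_eqset E f (fun _ => r) (Or.inr (Or.inl hf)) ξ
  rw [star_const] at this
  exact this

lemma exists_fiber (f : X → X) (hf : (Set.range f).Finite) (ξ : Y) :
    ∃ r, E.star f ξ = E.incl r ∧ ξ ∈ E.sets {x | f x = r} := by
  by_contra hcon
  push_neg at hcon
  have hnone : ∀ r, ξ ∉ E.sets {x | f x = r} := by
    intro r hmem
    have := (mem_fiber_iff E f hf r ξ).1 hmem
    exact hcon r this hmem
  -- induction over finite subsets of the range
  have key : ∀ s : Set X, s.Finite → ξ ∉ E.sets {x | f x ∈ s} := by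
    intro s hs
    refine Set.Finite.induction_on (motive := fun s _ => ξ ∉ E.sets {x | f x ∈ s}) s hs ?_ ?_
    · simpa using not_mem_empty E ξ
    · intro a t hat ht ih
      have heq : {x | f x ∈ insert a t} = {x | f x = a} ∪ {x | f x ∈ t} := by
        ext x; simp [Set.mem_insert_iff]
      rw [heq]
      apply mem_union_disjoint E _ _ _ ξ (hnone a) ih
      ext x
      simp only [Set.mem_inter_iff, Set.mem_setOf_eq, Set.mem_empty_iff_false, iff_false]
      rintro ⟨rfl, hmem⟩
      exact hat hmem
  have h1 := key (Set.range f) hf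
  have h2 : {x | f x ∈ Set.range f} = Set.univ := by
    ext x; simp
  rw [h2] at h1
  exact h1 (mem_univ E ξ)

/-- multiplicativity -/
lemma mem_inter (A B : Set X) (ξ : Y) (hA : ξ ∈ E.sets A) (hB : ξ ∈ E.sets B) :
    ξ ∈ E.sets (A ∩ B) := by
  classical
  set P : X → Set X := fun x => {y | (y ∈ A ↔ x ∈ A) ∧ (y ∈ B ↔ x ∈ B)} with hP
  have hxP : ∀ x, x ∈ P x := fun x => ⟨Iff.rfl, Iff.rfl⟩
  have hPeq : ∀ x z, z ∈ P x → P z = P x := by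
    intro x z hz
    simp only [hP, Set.mem_setOf_eq] at hz
    ext y
    simp only [hP, Set.mem_setOf_eq, hz.1, hz.2]
  set g : Bool → Bool → X := fun s t =>
    if h : {y | (y ∈ A ↔ s = true) ∧ (y ∈ B ↔ t = true)}.Nonempty then h.some else E.zero
    with hg
  set f : X → X := fun x => g (decide (x ∈ A)) (decide (x ∈ B)) with hf
  have hfP : ∀ x, f x ∈ P x := by
    intro x
    have hne : {y | (y ∈ A ↔ decide (x ∈ A) = true) ∧
        (y ∈ B ↔ decide (x ∈ B) = true)}.Nonempty := ⟨x, by simp⟩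
    have hfx : f x = hne.some := by rw [hf]; simp only [hg]; rw [dif_pos hne]
    rw [hfx]
    have h2 := hne.some_mem
    rw [Set.mem_setOf_eq] at h2
    exact ⟨h2.1.trans (by simp), h2.2.trans (by simp)⟩
  have hrange : (Set.range f).Finite := by
    have hsub : Set.range f ⊆ Set.range (fun p : Bool × Bool => g p.1 p.2) := by
      rintro y ⟨x, rfl⟩
      exact ⟨(decide (x ∈ A), decide (x ∈ B)), rfl⟩
    exact (Set.finite_range _).subset hsub
  have hfiber : ∀ x, {y | f y = f x} = P x := by
    intro x
    ext y
    simp only [Set.mem_setOf_eq]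
    constructor
    · intro h
      have h1 := hfP y
      rw [h] at h1
      have h2 := hfP x
      simp only [hP, Set.mem_setOf_eq] at h1 h2 ⊢
      exact ⟨by rw [← h1.1, h2.1], by rw [← h1.2, h2.2]⟩
    · intro h
      simp only [hP, Set.mem_setOf_eq] at h
      show g (decide (y ∈ A)) (decide (y ∈ B)) = g (decide (x ∈ A)) (decide (x ∈ B))
      rw [show decide (y ∈ A) = decide (x ∈ A) by simp [h.1],
        show decide (y ∈ B) = decide (x ∈ B) by simp [h.2]]
  obtain ⟨r, hr, hmem⟩ := exists_fiber E f hrange ξ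
  have hfiber_ne : {x | f x = r}.Nonempty := by
    by_contra hne
    rw [Set.not_nonempty_iff_eq_empty] at hne
    rw [hne] at hmem
    exact not_mem_empty E ξ hmem
  obtain ⟨x0, hfx0⟩ := hfiber_ne
  rw [show r = f x0 from hfx0.symm] at hr hmem
  rw [hfiber] at hmem
  -- any part not containing x0 is not in the ultrafilter
  have hnotmem : ∀ C : Set X, (∀ x1 ∈ C, P x1 = C) → x0 ∉ C → ξ ∉ E.sets C := by
    intro C hC hx0C hmemC
    rcases C.eq_empty_or_nonempty with rfl | ⟨x1, hx1⟩
    · exact not_mem_empty E ξ hmemC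
    · have hPx1 : P x1 = C := hC x1 hx1
      rw [← hPx1, ← hfiber] at hmemC
      have hstar := (mem_fiber_iff E f hrange (f x1) ξ).1 hmemC
      rw [hr] at hstar
      have hff : f x1 = f x0 := E.incl_injective hstar.symm
      have h1 : f x0 ∈ C := by rw [← hPx1, ← hff]; exact hfP x1
      have h2 : P (f x0) = C := hC _ h1
      have h3 : P (f x0) = P x0 := hPeq x0 (f x0) (hfP x0)
      rw [h2] at h3
      rw [h3] at hx0C
      exact hx0C (hxP x0)
  by_cases hx0A : x0 ∈ A
  · by_cases hx0B : x0 ∈ B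
    · have : P x0 = A ∩ B := by
        ext y
        simp only [hP, Set.mem_setOf_eq, Set.mem_inter_iff, hx0A, hx0B, iff_true]
      rwa [this] at hmem
    · exfalso
      have hC1 : ξ ∉ E.sets (A ∩ B) := by
        apply hnotmem
        · intro x1 hx1
          ext y
          simp only [hP, Set.mem_setOf_eq, Set.mem_inter_iff, hx1.1, hx1.2, iff_true]
        · exact fun h => hx0B h.2
      have hC2 : ξ ∉ E.sets (B \ A) := by
        apply hnotmem
        · intro x1 hx1
          ext y
          simp only [hP, Set.mem_setOf_eq, Set.mem_diff, hx1.1, hx1.2, iff_true, iff_false]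
          tauto
        · exact fun h => hx0B h.1
      have hBd : (A ∩ B) ∪ (B \ A) = B := by
        ext y; by_cases hy : y ∈ A <;> simp [hy]
      have := mem_union_disjoint E (A ∩ B) (B \ A)
        (Set.eq_empty_iff_forall_notMem.mpr fun y hy => hy.2.2 hy.1.1) ξ hC1 hC2
      rw [hBd] at this
      exact this hB
  · exfalso
    have hC1 : ξ ∉ E.sets (A ∩ B) := by
      apply hnotmem
      · intro x1 hx1
        ext y
        simp only [hP, Set.mem_setOf_eq, Set.mem_inter_iff, hx1.1, hx1.2, iff_true]
      · exact fun h => hx0A h.1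
    have hC2 : ξ ∉ E.sets (A \ B) := by
      apply hnotmem
      · intro x1 hx1
        ext y
        simp only [hP, Set.mem_setOf_eq, Set.mem_diff, hx1.1, hx1.2, iff_true, iff_false]
        try tauto
      · exact fun h => hx0A h.1
    have hAd : (A ∩ B) ∪ (A \ B) = A := by
      ext y; by_cases hy : y ∈ B <;> simp [hy]
    have := mem_union_disjoint E (A ∩ B) (A \ B)
      (Set.eq_empty_iff_forall_notMem.mpr fun y hy => hy.2.2 hy.1.2) ξ hC1 hC2
    rw [hAd] at this
    exact this hA

lemma incl_mem {A : Set X} {x : X} (hx : x ∈ A) : E.incl x ∈ E.sets A := by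
  rw [mem_sets_iff, E.star_incl]
  simp [chi, hx]

lemma mem_superset {A B : Set X} (h : A ⊆ B) (ξ : Y) (hA : ξ ∈ E.sets A) :
    ξ ∈ E.sets B := by
  by_contra hB
  rw [← mem_compl_iff] at hB
  have hm := mem_inter E A Bᶜ ξ hA hB
  have hempty : A ∩ Bᶜ = ∅ :=
    Set.eq_empty_iff_forall_notMem.mpr fun x hx => hx.2 (h hx.1)
  rw [hempty] at hm
  exact not_mem_empty E ξ hm

/-- the ultrafilter attached to a point of `Y` -/
noncomputable def ups (ξ : Y) : Ultrafilter X :=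
  Ultrafilter.ofComplNotMemIff
    { sets := {A | ξ ∈ E.sets A}
      univ_sets := mem_univ E ξ
      sets_of_superset := fun hA h => mem_superset E h ξ hA
      inter_sets := fun hA hB => mem_inter E _ _ ξ hA hB }
    (fun A => (not_congr (mem_compl_iff E A ξ)).trans not_not)

lemma mem_ups (ξ : Y) (A : Set X) : A ∈ ups E ξ ↔ ξ ∈ E.sets A := Iff.rfl

lemma map_ups (f : X → X) (ξ : Y) :
    Ultrafilter.map f (ups E ξ) = ups E (E.star f ξ) := by
  apply Ultrafilter.coe_injective
  apply Filter.ext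
  intro A
  rw [Ultrafilter.coe_map, Filter.mem_map, Ultrafilter.mem_coe, Ultrafilter.mem_coe,
    mem_ups, mem_ups]
  have h1 : chi E (f ⁻¹' A) = chi E A ∘ f := by
    funext x; simp [chi, Set.mem_preimage]
  rw [mem_sets_iff, mem_sets_iff, h1, E.comp, Function.comp_apply]

end WFEAux


/-- If the S-topology of a weak functional extension `Y` of `X` is Hausdorff and
quasi-compact, then each family `U_ξ = {A ⊆ X : ξ ∈ *A}` is an ultrafilter on `X` and
`υ : ξ ↦ U_ξ` is a homeomorphism of `Y` onto the space `Ultrafilter X` (the Stone–Čech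
compactification of the discrete space `X`, with the Stone topology); moreover
`Ultrafilter.map f (υ ξ) = υ (f* ξ)` for all `f : X → X` and `ξ ∈ Y`. -/
theorem stmt19 {X Y : Type*} (E : WeakFunctionalExtension X Y)
    (hT2 : @T2Space Y E.sTopology) (hC : @CompactSpace Y E.sTopology) :
    ∃ υ : Y → Ultrafilter X,
      (∀ (ξ : Y) (A : Set X), A ∈ υ ξ ↔ ξ ∈ E.sets A) ∧
      Function.Bijective υ ∧
      @Continuous Y (Ultrafilter X) E.sTopology inferInstance υ ∧
      @IsOpenMap Y (Ultrafilter X) E.sTopology inferInstance υ ∧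
      ∀ (f : X → X) (ξ : Y), Ultrafilter.map f (υ ξ) = υ (E.star f ξ) := by
  classical
  letI : TopologicalSpace Y := E.sTopology
  haveI := hT2
  haveI := hC
  have hbasis : TopologicalSpace.IsTopologicalBasis (Set.range E.sets) := by
    refine ⟨?_, ?_, rfl⟩
    · rintro _ ⟨A, rfl⟩ _ ⟨B, rfl⟩ ξ hξ
      exact ⟨E.sets (A ∩ B), ⟨A ∩ B, rfl⟩, WFEAux.mem_inter E A B ξ hξ.1 hξ.2,
        fun η hη => ⟨WFEAux.mem_superset E Set.inter_subset_left η hη,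
          WFEAux.mem_superset E Set.inter_subset_right η hη⟩⟩
    · apply Set.eq_univ_iff_forall.mpr
      intro ξ
      exact ⟨E.sets Set.univ, ⟨Set.univ, rfl⟩, WFEAux.mem_univ E ξ⟩
  have hopen : ∀ A : Set X, IsOpen (E.sets A) := fun A => hbasis.isOpen ⟨A, rfl⟩
  have hinj : Function.Injective (WFEAux.ups E) := by
    intro ξ η h
    by_contra hne
    obtain ⟨U, V, hUo, hVo, hξU, hηV, hdisj⟩ := t2_separation hne
    obtain ⟨_, ⟨A, rfl⟩, hξA, hAU⟩ := hbasis.exists_subset_of_mem_open hξU hUo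
    obtain ⟨_, ⟨B, rfl⟩, hηB, hBV⟩ := hbasis.exists_subset_of_mem_open hηV hVo
    have hξB : ξ ∈ E.sets B := by
      have h2 : B ∈ WFEAux.ups E η := (WFEAux.mem_ups E η B).mpr hηB
      rw [← h] at h2
      exact (WFEAux.mem_ups E ξ B).mp h2
    have hm := WFEAux.mem_inter E A B ξ hξA hξB
    have hAB : A ∩ B = ∅ := by
      rw [Set.eq_empty_iff_forall_notMem]
      intro x hx
      exact Set.disjoint_left.mp hdisj (hAU (WFEAux.incl_mem E hx.1))
        (hBV (WFEAux.incl_mem E hx.2))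
    rw [hAB] at hm
    exact WFEAux.not_mem_empty E ξ hm
  have hsurj : Function.Surjective (WFEAux.ups E) := by
    intro V
    obtain ⟨ξ, -, hξ⟩ := isCompact_univ.ultrafilter_le_nhds
      (Ultrafilter.map E.incl V) (by simp)
    refine ⟨ξ, ?_⟩
    have hmemV : ∀ A ∈ V, ξ ∈ E.sets A := by
      intro A hA
      by_contra hnot
      rw [← WFEAux.mem_compl_iff] at hnot
      have h1 : E.sets Aᶜ ∈ nhds ξ := (hopen Aᶜ).mem_nhds hnot
      have h2 : E.sets Aᶜ ∈ Ultrafilter.map E.incl V := hξ h1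
      rw [Ultrafilter.mem_map] at h2
      have h4 := V.toFilter.inter_sets h2 hA
      have h5 : (E.incl ⁻¹' E.sets Aᶜ) ∩ A = ∅ := by
        rw [Set.eq_empty_iff_forall_notMem]
        rintro x ⟨hx1, hx2⟩
        have h6 : E.incl x ∈ E.sets Aᶜ := hx1
        rw [WFEAux.mem_compl_iff] at h6
        exact h6 (WFEAux.incl_mem E hx2)
      rw [h5] at h4
      exact Filter.empty_notMem (V : Filter X) h4
    apply Ultrafilter.coe_injective
    apply Filter.ext
    intro A
    rw [Ultrafilter.mem_coe, Ultrafilter.mem_coe, WFEAux.mem_ups]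
    constructor
    · intro hmem
      by_contra hA
      rw [← Ultrafilter.compl_mem_iff_notMem] at hA
      have := hmemV Aᶜ hA
      rw [WFEAux.mem_compl_iff] at this
      exact this hmem
    · exact hmemV A
  have hcont : Continuous (WFEAux.ups E) := by
    rw [ultrafilterBasis_is_basis.continuous_iff]
    rintro _ ⟨A, rfl⟩
    have : WFEAux.ups E ⁻¹' {u : Ultrafilter X | A ∈ u} = E.sets A := by
      ext ξ
      simp only [Set.mem_preimage, Set.mem_setOf_eq, WFEAux.mem_ups]
    rw [this]
    exact hopen A
  have hopenmap : IsOpenMap (WFEAux.ups E) := by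
    intro U hU
    apply isOpen_iff_forall_mem_open.mpr
    rintro V ⟨ξ, hξU, rfl⟩
    obtain ⟨_, ⟨A, rfl⟩, hξA, hAU⟩ := hbasis.exists_subset_of_mem_open hξU hU
    refine ⟨{u : Ultrafilter X | A ∈ u}, ?_, ultrafilter_isOpen_basic A, hξA⟩
    rintro W hW
    obtain ⟨η, rfl⟩ := hsurj W
    exact ⟨η, hAU ((WFEAux.mem_ups E η A).mp hW), rfl⟩
  exact ⟨WFEAux.ups E, fun ξ A => WFEAux.mem_ups E ξ A, ⟨hinj, hsurj⟩, hcont, hopenmap,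
    fun f ξ => WFEAux.map_ups E f ξ⟩
end
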